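/- arXiv:2208.02539 — 2 statements merged into one kernel-verified Lean document; each statement's English description precedes it below -/
import Mathlib

section
/- Let K be a (possibly noncommutative) field, E a K-vector space equipped with a ℤ-bilinear Lie bracket and a map sending each u ∈ E to an additive map u(·) : K → K, satisfying [u, λv] = u(λ)v + λ[u,v] for all u,v ∈ E, λ ∈ K (a K-Lie pseudoalgebra in the sense of Jacobson). If K is commutative and dim_K E ≥ 2, then the pseudoalgebra automatically satisfies the Lie–Rinehart axiom (λu)(μ) = λ·(u(μ)) for all λ, μ ∈ K and u ∈ E. -/
/-- Jacobson's observation: let `K` be a (commutative) field and `E` a `K`-vector space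
equipped with a `ℤ`-bilinear Lie bracket `brk` and, for each `u ∈ E`, an additive
operation `act u : K → K`, satisfying `[u, λ•v] = (act u λ) • v + λ • [u,v]`
(a `K`-Lie pseudoalgebra).  If `dim_K E ≥ 2` (there exist two `K`-linearly independent
vectors), then the Lie–Rinehart axiom `(λ•u)(μ) = λ * (u(μ))` holds automatically. -/
theorem pseudoalgebra_lieRinehart_axiom_automatic
    {K E : Type*} [Field K] [AddCommGroup E] [Module K E]
    (brk : E → E → E) (act : E → K → K)
    (hadd_left : ∀ u v w : E, brk (u + v) w = brk u w + brk v w)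
    (hadd_right : ∀ u v w : E, brk u (v + w) = brk u v + brk u w)
    (halt : ∀ u : E, brk u u = 0)
    (hjacobi : ∀ u v w : E, brk (brk u v) w + brk (brk v w) u + brk (brk w u) v = 0)
    (hact_add : ∀ (u : E) (lam mu : K), act u (lam + mu) = act u lam + act u mu)
    (haxiom : ∀ (u v : E) (lam : K),
      brk u (lam • v) = act u lam • v + lam • brk u v)
    (hdim : ∃ u v : E, LinearIndependent K ![u, v]) :
    ∀ (lam mu : K) (u : E), act (lam • u) mu = lam * act u mu := by
  -- skew-symmetry
  have hskew : ∀ x y : E, brk x y = - brk y x := by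
    intro x y
    have h := halt (x + y)
    rw [hadd_left, hadd_right, hadd_right, halt, halt] at h
    have h' : brk x y + brk y x = 0 := by simpa using h
    exact eq_neg_of_add_eq_zero_left h'
  intro lam mu u
  obtain ⟨e1, e2, hli⟩ := hdim
  -- key identity
  have key : ∀ v : E, (act (lam • u) mu - lam * act u mu) • v
      = (mu * act v lam - act (mu • v) lam) • u := by
    intro v
    have h1 := haxiom (lam • u) v mu
    rw [hskew (lam • u) (mu • v), haxiom (mu • v) u lam, hskew (lam • u) v,
      haxiom v u lam, hskew (mu • v) u, haxiom u v mu, hskew v u] at h1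
    linear_combination (norm := module) -h1
  set a := act (lam • u) mu - lam * act u mu with ha
  have h1 := key e1
  have h2 := key e2
  set c1 := mu * act e1 lam - act (mu • e1) lam
  set c2 := mu * act e2 lam - act (mu • e2) lam
  have hcomb : (a * c2) • e1 + (-(a * c1)) • e2 = 0 := by
    have : (a * c2) • e1 = (a * c1) • e2 := by
      calc (a * c2) • e1 = c2 • (a • e1) := by rw [smul_smul, mul_comm]
        _ = c2 • c1 • u := by rw [h1]
        _ = c1 • c2 • u := smul_comm _ _ _
        _ = c1 • (a • e2) := by rw [h2]
        _ = (a * c1) • e2 := by rw [smul_smul, mul_comm]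
    rw [this, ← add_smul, add_neg_cancel, zero_smul]
  obtain ⟨hz2, hz1⟩ := LinearIndependent.pair_iff.mp hli _ _ hcomb
  have hA : a = 0 := by
    by_contra hne
    have hc2 : c2 = 0 := by
      rcases mul_eq_zero.mp hz2 with h | h
      · exact absurd h hne
      · exact h
    have hc1 : c1 = 0 := by
      have : a * c1 = 0 := neg_eq_zero.mp hz1
      rcases mul_eq_zero.mp this with h | h
      · exact absurd h hne
      · exact h
    rw [hc1, zero_smul] at h1
    rcases smul_eq_zero.mp h1 with h | h
    · exact hne h
    · exact hli.ne_zero 0 (by simpa using h)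
  exact sub_eq_zero.mp hA
end

section
/- Let N be a group with center Z, let 𝔊 be a group, and let X : 𝔊 → Out(N) be an abstract kernel. Form the pullback G of Aut(N) → Out(N) along X. Then the sequence 0 → Z → N → G → 𝔊 → 1, where N → G is induced by the conjugation map N → Aut(N) together with the trivial map to 𝔊, is an exact sequence of groups, and N → G with the evident G-action on N is a crossed module (so the sequence is a crossed 2-fold extension of 𝔊 by Z). -/
/-- The subgroup of inner automorphisms of a group `N`. -/
def Inn (N : Type*) [Group N] : Subgroup (MulAut N) :=
  (MulAut.conj : N →* MulAut N).range

instance Inn.normal (N : Type*) [Group N] : (Inn N).Normal := by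
  constructor
  rintro _ ⟨n, rfl⟩ φ
  refine ⟨φ n, ?_⟩
  ext m
  show MulAut.conj (φ n) m = (φ * MulAut.conj n * φ⁻¹) m
  simp only [MulAut.mul_apply, MulAut.conj_apply, map_mul, map_inv,
    MulAut.apply_inv_self]

/-- The pullback of `Aut(N) → Out(N)` along an abstract kernel `X : 𝔊 → Out(N)`,
realized as the subgroup of `𝔊 × Aut(N)` of pairs `(g, φ)` with `X g = [φ]`. -/
def Pull {N 𝔊 : Type*} [Group N] [Group 𝔊] (X : 𝔊 →* MulAut N ⧸ Inn N) :
    Subgroup (𝔊 × MulAut N) where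
  carrier := {p | X p.1 = QuotientGroup.mk p.2}
  one_mem' := by simp
  mul_mem' := by
    intro p q hp hq
    simp only [Set.mem_setOf_eq, Prod.fst_mul, Prod.snd_mul, map_mul] at *
    rw [hp, hq]; rfl
  inv_mem' := by
    intro p hp
    simp only [Set.mem_setOf_eq, Prod.fst_inv, Prod.snd_inv, map_inv] at *
    rw [hp]; rfl

/-- The map `N → G` into the pullback, given by the trivial map to `𝔊` together with
the conjugation map `N → Aut(N)`. -/
def toPull {N 𝔊 : Type*} [Group N] [Group 𝔊] (X : 𝔊 →* MulAut N ⧸ Inn N) :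
    N →* Pull X where
  toFun n := ⟨(1, MulAut.conj n), by
    show X 1 = QuotientGroup.mk (MulAut.conj n)
    rw [map_one]
    haveI : ((MulAut.conj : N →* MulAut N).range).Normal := Inn.normal N
    exact ((QuotientGroup.eq_one_iff _).mpr (MonoidHom.mem_range.mpr ⟨n, rfl⟩)).symm⟩
  map_one' := by ext <;> simp
  map_mul' m n := by ext <;> simp

/-!
Conjugation `N → Aut(N)` has kernel `Z` and image `Inn(N)`, the kernel of `Aut(N) → Out(N)`.
Hence a pair `(1, φ)` lies in the pullback exactly when `φ` is inner, which gives
exactness at `G`; surjectivity of `Aut(N) → Out(N)` gives surjectivity of `G → 𝔊`. The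
Peiffer identity is `conj (φ n) = φ ∘ conj n ∘ φ⁻¹`, and `Z` is `G`-stable because it is
characteristic.
-/

namespace MulAut

variable {N : Type*} [Group N]

theorem conj_eq_one_iff {n : N} : conj n = 1 ↔ n ∈ Subgroup.center N := by
  rw [Subgroup.mem_center_iff, MulEquiv.ext_iff]
  refine forall_congr' fun m => ?_
  rw [conj_apply, one_apply, mul_inv_eq_iff_eq_mul, eq_comm]

theorem conj_apply_eq (φ : MulAut N) (n : N) : conj (φ n) = φ * conj n * φ⁻¹ := by
  ext m
  simp only [mul_apply, conj_apply, map_mul, map_inv, apply_inv_self]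

end MulAut

namespace Pull

variable {N 𝔊 : Type*} [Group N] [Group 𝔊] (X : 𝔊 →* MulAut N ⧸ Inn N)

theorem coe_toPull (n : N) : (toPull X n : 𝔊 × MulAut N) = (1, MulAut.conj n) := rfl

theorem toPull_eq_one_iff (n : N) : toPull X n = 1 ↔ n ∈ Subgroup.center N := by
  rw [← MulAut.conj_eq_one_iff, ← Subtype.coe_inj, coe_toPull]
  simp

theorem fst_eq_one_iff_exists_toPull_eq (p : Pull X) :
    (p : 𝔊 × MulAut N).1 = 1 ↔ ∃ n : N, toPull X n = p := by
  constructor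
  · obtain ⟨⟨g, φ⟩, hp⟩ := p
    rintro rfl
    have hφ : φ ∈ Inn N := by
      rw [← QuotientGroup.eq_one_iff, ← hp, map_one]
    obtain ⟨n, rfl⟩ := hφ
    exact ⟨n, rfl⟩
  · rintro ⟨n, rfl⟩
    rfl

theorem fst_surjective : Function.Surjective fun p : Pull X => (p : 𝔊 × MulAut N).1 := by
  intro g
  obtain ⟨φ, hφ⟩ := QuotientGroup.mk_surjective (X g)
  exact ⟨⟨(g, φ), hφ.symm⟩, rfl⟩

theorem toPull_snd_apply (p : Pull X) (n : N) :
    toPull X ((p : 𝔊 × MulAut N).2 n) = p * toPull X n * p⁻¹ := by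
  ext : 1
  simp [coe_toPull, MulAut.conj_apply_eq, Prod.ext_iff]

end Pull

/-- Turing's crossed 2-fold extension associated with an abstract kernel
`X : 𝔊 → Out(N)`: with `G` the pullback of `Aut(N) → Out(N)` along `X` and `Z` the
center of `N`, the sequence `0 → Z → N → G → 𝔊 → 1` is exact, `N → G` with the
evident `G`-action on `N` is a crossed module, and `Z → N` is a map of `G`-groups. -/
theorem abstract_kernel_crossed_two_fold_extension
    {N 𝔊 : Type*} [Group N] [Group 𝔊] (X : 𝔊 →* MulAut N ⧸ Inn N) :
    (∀ n : N, toPull X n = 1 ↔ n ∈ Subgroup.center N) ∧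
    (∀ p : Pull X, ((p : 𝔊 × MulAut N).1 = 1 ↔ ∃ n : N, toPull X n = p)) ∧
    (∀ g : 𝔊, ∃ p : Pull X, (p : 𝔊 × MulAut N).1 = g) ∧
    (∀ (p : Pull X) (n : N),
      toPull X ((p : 𝔊 × MulAut N).2 n) = p * toPull X n * p⁻¹) ∧
    (∀ m n : N, ((toPull X m : 𝔊 × MulAut N).2) n = m * n * m⁻¹) ∧
    (∀ (p : Pull X), ∀ z ∈ Subgroup.center N,
      (p : 𝔊 × MulAut N).2 z ∈ Subgroup.center N) :=
  ⟨Pull.toPull_eq_one_iff X, Pull.fst_eq_one_iff_exists_toPull_eq X, Pull.fst_surjective X,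
    Pull.toPull_snd_apply X, fun _ _ => rfl,
    fun p _ hz => MulEquivClass.apply_mem_center (p : 𝔊 × MulAut N).2 hz⟩
end
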